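/- arXiv:math/0307352 — 2 statements merged into one kernel-verified Lean document; each statement's English description precedes it below -/
import Mathlib

section
/- For a fixed positive integer n, Σ_{m=1}^{∞} c_n(m)/m^s = ζ(s)·Σ_{d|n} μ(n/d)·d^{1-s}, for real s > 1. -/
open ArithmeticFunction

noncomputable def ramanujanSum (n m : ℕ) : ℂ :=
  ∑ k ∈ (Finset.Icc 1 n).filter (fun k => Nat.Coprime k n),
    Complex.exp (2 * Real.pi * Complex.I * m * k / n)

/-!
Detecting coprimality by `∑_{d ∣ (k, n)} μ d` and summing the complete exponential sums
`∑_{j ≤ N} e(mj/N) = N · [N ∣ m]` gives Kluyver's formula `c_n(m) = ∑_{d ∣ (n, m)} μ(n/d) d`.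
So `m ↦ c_n(m)` is a finite linear combination of the indicators of the multiples of the
divisors `d` of `n`, and the Dirichlet series of the indicator of `d ℕ` is `d^{-s} ζ(s)`.
-/

open Complex Finset
open scoped ArithmeticFunction.Moebius

theorem sum_Icc_one_pow_of_pow_eq_one {K : Type*} [Field K] [DecidableEq K] {z : K} {N : ℕ}
    (hz : z ^ N = 1) : ∑ j ∈ Icc 1 N, z ^ j = if z = 1 then (N : K) else 0 := by
  split_ifs with h
  · simp [h]
  · rw [← Ico_add_one_right_eq_Icc, sum_Ico_eq_sum_range, Nat.add_sub_cancel]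
    simp_rw [pow_add, pow_one, ← mul_sum, geom_sum_eq h, hz, sub_self, zero_div, mul_zero]

theorem sum_Icc_one_exp_two_pi_I_mul_div {N : ℕ} (hN : N ≠ 0) (m : ℕ) :
    ∑ j ∈ Icc 1 N, exp (2 * Real.pi * I * m * j / N) = if N ∣ m then (N : ℂ) else 0 := by
  set ζ := exp (2 * Real.pi * I / N) with hζ_def
  have hζ : IsPrimitiveRoot ζ N := isPrimitiveRoot_exp N hN
  have hpow (j : ℕ) : exp (2 * Real.pi * I * m * j / N) = (ζ ^ m) ^ j := by
    rw [hζ_def, ← exp_nat_mul, ← exp_nat_mul]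
    ring_nf
  have hroot : (ζ ^ m) ^ N = 1 := by
    rw [← pow_mul, mul_comm, pow_mul, hζ.pow_eq_one, one_pow]
  simp_rw [hpow, sum_Icc_one_pow_of_pow_eq_one hroot, hζ.pow_eq_one_iff_dvd]

theorem ArithmeticFunction.sum_divisors_moebius {R : Type*} [Ring R] (N : ℕ) :
    ∑ d ∈ N.divisors, (μ d : R) = if N = 1 then 1 else 0 := by
  have h := congr($(coe_moebius_mul_coe_zeta (R := R)) N)
  rwa [coe_mul_zeta_apply, one_apply] at h

theorem ArithmeticFunction.sum_divisors_filter_dvd_moebius {R : Type*} [Ring R] {n : ℕ}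
    (hn : n ≠ 0) (k : ℕ) :
    ∑ d ∈ n.divisors with d ∣ k, (μ d : R) = if k.Coprime n then 1 else 0 := by
  have h : {d ∈ n.divisors | d ∣ k} = (k.gcd n).divisors := by
    ext d
    simp only [mem_filter, Nat.mem_divisors, Nat.dvd_gcd_iff, ne_eq, Nat.gcd_eq_zero_iff, hn,
      and_false, not_false_eq_true, and_true]
    tauto
  simp [h, sum_divisors_moebius, Nat.coprime_iff_gcd_eq_one]

theorem Nat.Icc_filter_dvd_eq_map {d : ℕ} (hd : d ≠ 0) (n : ℕ) :
    {k ∈ Icc 1 n | d ∣ k} = (Icc 1 (n / d)).map ⟨(d * ·), mul_right_injective₀ hd⟩ := by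
  ext k
  simp only [mem_filter, mem_Icc, mem_map, Function.Embedding.coeFn_mk]
  constructor
  · rintro ⟨⟨hk1, hkn⟩, j, rfl⟩
    refine ⟨j, ⟨Nat.pos_of_mul_pos_left hk1, ?_⟩, rfl⟩
    rwa [Nat.le_div_iff_mul_le (Nat.pos_of_ne_zero hd), mul_comm]
  · rintro ⟨j, ⟨hj1, hjn⟩, rfl⟩
    refine ⟨⟨Nat.mul_pos (Nat.pos_of_ne_zero hd) hj1, ?_⟩, dvd_mul_right d j⟩
    rwa [Nat.le_div_iff_mul_le (Nat.pos_of_ne_zero hd), mul_comm] at hjn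

theorem ramanujanSum_eq_sum_moebius (n m : ℕ) :
    ramanujanSum n m = ∑ d ∈ n.divisors with d ∣ m, (μ (n / d) : ℂ) * d := by
  set e : ℕ → ℂ := fun k => exp (2 * Real.pi * I * m * k / n) with he
  calc ramanujanSum n m = ∑ k ∈ Icc 1 n, ∑ d ∈ n.divisors with d ∣ k, (μ d : ℂ) * e k := by
        rw [ramanujanSum, sum_filter]
        refine sum_congr rfl fun k hk => ?_
        have hn : n ≠ 0 := by grind
        rw [← sum_mul, sum_divisors_filter_dvd_moebius hn, ite_mul, one_mul, zero_mul]
    _ = ∑ d ∈ n.divisors, (μ d : ℂ) * ∑ k ∈ Icc 1 n with d ∣ k, e k := by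
        simp_rw [mul_sum]
        exact sum_comm' fun k d => by
          simp only [mem_filter, mem_Icc, Nat.mem_divisors]
          tauto
    _ = ∑ d ∈ n.divisors, (μ d : ℂ) * (if n / d ∣ m then ((n / d : ℕ) : ℂ) else 0) := by
        refine sum_congr rfl fun d hd => ?_
        obtain ⟨hdn, hn⟩ := Nat.mem_divisors.mp hd
        have hd0 : d ≠ 0 := ne_zero_of_dvd_ne_zero hn hdn
        rw [Nat.Icc_filter_dvd_eq_map hd0, sum_map,
          ← sum_Icc_one_exp_two_pi_I_mul_div ((Nat.div_ne_zero_iff_of_dvd hdn).mpr ⟨hn, hd0⟩)]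
        congr 1
        refine sum_congr rfl fun j _ => ?_
        simp only [he, Function.Embedding.coeFn_mk]
        congr 1
        rw [Nat.cast_div hdn (by exact_mod_cast hd0)]
        field_simp
        push_cast
        ring
    _ = ∑ d ∈ n.divisors, (μ (n / d) : ℂ) * (if d ∣ m then (d : ℂ) else 0) := by
        rw [← Nat.sum_div_divisors]
        refine sum_congr rfl fun d hd => ?_
        rw [Nat.div_div_self (Nat.dvd_of_mem_divisors hd) (Nat.mem_divisors.mp hd).2]
    _ = _ := by simp_rw [sum_filter, mul_ite, mul_zero]

theorem LSeries_eq_tsum_nat_add_one (f : ℕ → ℂ) (s : ℂ) :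
    LSeries f s = ∑' m : ℕ, f (m + 1) / ((m + 1 : ℕ) : ℂ) ^ s := by
  rw [LSeries, ← Nat.succ_injective.tsum_eq]
  · exact tsum_congr fun m => LSeries.term_of_ne_zero m.succ_ne_zero f s
  · intro m hm
    rcases m with _ | k
    · exact absurd (LSeries.term_zero f s) hm
    · exact ⟨k, rfl⟩

theorem LSeries_ite_dvd {d : ℕ} (hd : d ≠ 0) {s : ℂ} (hs : 1 < s.re) :
    LSeries (fun m => if d ∣ m then 1 else 0) s = (d : ℂ) ^ (-s) * riemannZeta s := by
  rw [← LSeries_one_eq_riemannZeta hs, LSeries, LSeries, ← tsum_mul_left,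
    ← (mul_right_injective₀ hd).tsum_eq]
  · refine tsum_congr fun j => ?_
    rcases eq_or_ne j 0 with rfl | hj
    · simp
    · simp [LSeries.term_of_ne_zero hj, LSeries.term_of_ne_zero (mul_ne_zero hd hj),
        natCast_mul_natCast_cpow, cpow_neg, mul_comm]
  · intro m hm
    obtain ⟨k, rfl⟩ : d ∣ m := by
      by_contra h
      exact hm (by simp [LSeries.term_def, h])
    exact ⟨k, rfl⟩

theorem ramanujanSum_dirichlet_series_in_m_general (n : ℕ) (s : ℝ) (hs : 1 < s) :
    ∑' m : ℕ, ramanujanSum n (m + 1) / ((m + 1 : ℕ) : ℂ) ^ (s : ℂ) =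
      riemannZeta s * ∑ d ∈ n.divisors, (moebius (n / d) : ℂ) * (d : ℂ) ^ ((1 : ℂ) - (s : ℂ)) := by
  have hs' : 1 < (s : ℂ).re := by simpa using hs
  have hsummable (d : ℕ) : LSeriesSummable (fun m => if d ∣ m then 1 else 0) s :=
    LSeriesSummable_of_bounded_of_one_lt_re (m := 1) (fun m _ => by split_ifs <;> simp) hs'
  have hkluyver : ramanujanSum n =
      ∑ d ∈ n.divisors, ((μ (n / d) : ℂ) * d) • fun m => if d ∣ m then 1 else 0 := by
    funext m
    simp [ramanujanSum_eq_sum_moebius, sum_filter]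
  rw [← LSeries_eq_tsum_nat_add_one, hkluyver, LSeries_sum fun d _ => (hsummable d).smul _,
    mul_sum]
  refine sum_congr rfl fun d hd => ?_
  have hd0 : d ≠ 0 := Nat.ne_of_gt (Nat.pos_of_mem_divisors hd)
  rw [LSeries_smul, LSeries_ite_dvd hd0 hs', sub_eq_add_neg,
    cpow_add _ _ (Nat.cast_ne_zero.mpr hd0), cpow_one]
  ring

theorem ramanujanSum_dirichlet_series_in_m (n : ℕ) (hn : 0 < n) (s : ℝ) (hs : 1 < s) :
    ∑' m : ℕ, ramanujanSum n (m + 1) / ((m + 1 : ℕ) : ℂ) ^ (s : ℂ) =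
      riemannZeta s * ∑ d ∈ n.divisors, (moebius (n / d) : ℂ) * (d : ℂ) ^ ((1 : ℂ) - (s : ℂ)) :=
  ramanujanSum_dirichlet_series_in_m_general n s hs
end

section
/- Every integer occurs as a coefficient of a cyclotomic polynomial of even index: {a_{2n}(k) : n, k ∈ ℕ} = ℤ. -/
open Polynomial Finset ArithmeticFunction
open scoped ArithmeticFunction.Moebius

/-!
Take an odd number of primes `P` in a window `(N, 2N)`; Chebyshev's bound
`2 ^ n ≤ (n + 1) * lcm (1, …, n)` shows that some window holds arbitrarily many primes.
For `m = 2 * ∏ P` the only divisors below `K = 2N + 2` are `1`, `2` and the `p ∈ P`, and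
`X ^ p * X ^ q ≡ 0`, so the Möbius product `Φ_m = ∏ (1 - X ^ d) ^ μ (m / d)` gives
`Φ_m ≡ (1 + ∑ p ∈ P, X ^ p) / (1 + X) mod X ^ K`. Hence the `j`-th coefficient of `Φ_m` is
`(-1) ^ j * (1 - #{p ∈ P | p ≤ j})` for `j < K`; at the `(n + 1)`-st smallest prime of `P`
and at its successor this is `n` and `-n`.
-/

theorem Nat.lcmUpto_le_pow_card_primesLE (n : ℕ) : n.lcmUpto ≤ n ^ #n.primesLE := by
  rw [Nat.lcmUpto_eq_prod_pow_log]
  refine Finset.prod_le_pow_card _ _ _ fun p hp => Nat.pow_log_le_self p ?_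
  have := Nat.two_le_of_mem_primesLE hp
  have := Nat.le_of_mem_primesLE hp
  omega

theorem card_primesLE_two_pow_le_of_forall_card_primes_Ioo_lt {t : ℕ}
    (ht : ∀ N, #{p ∈ Ioo N (2 * N) | p.Prime} < t) (k : ℕ) :
    #(Nat.primesLE (2 ^ k)) ≤ k * t := by
  induction k with
  | zero => simp [Nat.primesLE_one]
  | succ k ih =>
    have hsub : Nat.primesLE (2 ^ (k + 1)) ⊆
        Nat.primesLE (2 ^ k) ∪ {p ∈ Ioo (2 ^ k) (2 * 2 ^ k) | p.Prime} ∪ {2 ^ (k + 1)} := by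
      intro p hp
      simp only [Nat.mem_primesLE, mem_union, mem_filter, mem_Ioo, mem_singleton] at hp ⊢
      obtain ⟨hle, hprime⟩ := hp
      rw [pow_succ] at hle ⊢
      by_cases hlow : p ≤ 2 ^ k
      · exact .inl (.inl ⟨hlow, hprime⟩)
      by_cases htop : p = 2 ^ k * 2
      · exact .inr htop
      · exact .inl (.inr ⟨⟨by omega, by omega⟩, hprime⟩)
    have := ht (2 ^ k)
    calc #(Nat.primesLE (2 ^ (k + 1)))
        ≤ #(Nat.primesLE (2 ^ k)) + #{p ∈ Ioo (2 ^ k) (2 * 2 ^ k) | p.Prime} + 1 :=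
          (card_le_card hsub).trans <| (card_union_le _ _).trans <| by
            grw [card_union_le, card_singleton]
      _ ≤ (k + 1) * t := by rw [add_one_mul]; omega

theorem Nat.cube_lt_two_pow {k : ℕ} (hk : 10 ≤ k) : k ^ 3 < 2 ^ k := by
  induction k, hk using Nat.le_induction with
  | base => norm_num
  | succ k hk ih =>
    have : k ^ 2 * 10 ≤ k ^ 3 := by rw [pow_succ]; exact Nat.mul_le_mul_left _ hk
    calc (k + 1) ^ 3 ≤ 2 * k ^ 3 := by nlinarith
      _ < 2 * 2 ^ k := by omega
      _ = 2 ^ (k + 1) := by ring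

theorem exists_le_card_primes_Ioo_two_mul (t : ℕ) :
    ∃ N, t ≤ #{p ∈ Ioo N (2 * N) | p.Prime} := by
  by_contra! ht
  -- Otherwise `π (2 ^ k) ≤ k * t`, and Chebyshev's bound at `n = 2 ^ k` gives
  -- `2 ^ k ≤ k + 1 + k² t`, which fails for `k = t + 10` as the right side is below `k ^ 3`.
  generalize hk : t + 10 = k
  have hlcm : (2 ^ k).lcmUpto ≤ (2 ^ k) ^ (k * t) :=
    (Nat.lcmUpto_le_pow_card_primesLE _).trans <|
      Nat.pow_le_pow_right (by positivity)
        (card_primesLE_two_pow_le_of_forall_card_primes_Ioo_lt ht k)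
  have hpow : 2 ^ 2 ^ k ≤ 2 ^ (k + 1 + k * (k * t)) :=
    calc 2 ^ 2 ^ k ≤ (2 ^ k + 1) * (2 ^ k).lcmUpto := Chebyshev.two_pow_le_mul_lcmUpto _
      _ ≤ 2 ^ (k + 1) * (2 ^ k) ^ (k * t) := by
          gcongr
          rw [pow_succ]; have := Nat.one_le_two_pow (n := k); omega
      _ = 2 ^ (k + 1 + k * (k * t)) := by rw [← pow_mul, ← pow_add]
  have hexp := (Nat.pow_le_pow_iff_right one_lt_two).1 hpow
  have hcube := Nat.cube_lt_two_pow (k := k) (by omega)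
  have : k + 1 + k * (k * t) < k ^ 3 := by
    subst hk
    nlinarith
  omega

theorem ArithmeticFunction.sum_divisors_moebius_eq_zero {n : ℕ} (hn : 1 < n) :
    ∑ d ∈ n.divisors, μ d = 0 := by
  rw [← coe_mul_zeta_apply, moebius_mul_coe_zeta, one_apply_ne hn.ne']

theorem ArithmeticFunction.moebius_prod_primes {s : Finset ℕ} (hs : ∀ p ∈ s, p.Prime) :
    μ (∏ p ∈ s, p) = (-1) ^ #s := by
  rw [isMultiplicative_moebius.map_prod_of_prime s hs,
    prod_congr rfl fun p hp => moebius_apply_prime (hs p hp), prod_const]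

theorem Nat.squarefree_prod_primes {s : Finset ℕ} (hs : ∀ p ∈ s, p.Prime) :
    Squarefree (∏ p ∈ s, p) :=
  Finset.squarefree_prod_of_pairwise_isCoprime
    (fun p hp q hq hpq =>
      Nat.coprime_iff_isRelPrime.1 <| (Nat.coprime_primes (hs p hp) (hs q hq)).2 hpq)
    fun p hp => (hs p hp).squarefree

theorem Nat.eq_one_or_mem_of_dvd_prod_primes {s : Finset ℕ} (hs : ∀ p ∈ s, p.Prime) {K d : ℕ}
    (hK : ∀ p ∈ s, ∀ q ∈ s, p ≠ q → K ≤ p * q) (hd : d ∣ ∏ p ∈ s, p) (hdK : d < K) :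
    d = 1 ∨ d ∈ s := by
  have hsq : Squarefree d := (Nat.squarefree_prod_primes hs).squarefree_of_dvd hd
  have hsub : d.primeFactors ⊆ s := by
    rw [← Nat.primeFactors_prod hs]
    exact Nat.primeFactors_mono hd (prod_ne_zero_iff.2 fun p hp => (hs p hp).ne_zero)
  rw [← Nat.prod_primeFactors_of_squarefree hsq] at hdK ⊢
  rcases Nat.lt_or_ge 1 #d.primeFactors with h2 | h1
  · obtain ⟨p, hp, q, hq, hpq⟩ := one_lt_card.1 h2
    refine absurd hdK (not_lt.2 ((hK p (hsub hp) q (hsub hq) hpq).trans ?_))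
    calc p * q = ∏ r ∈ {p, q}, r := (prod_pair (f := id) hpq).symm
      _ ≤ ∏ r ∈ d.primeFactors, r :=
        Nat.le_of_dvd (prod_pos fun r hr => (Nat.prime_of_mem_primeFactors hr).pos)
          (prod_dvd_prod_of_subset _ _ _ (insert_subset hp (singleton_subset_iff.2 hq)))
  · rcases card_le_one_iff_subset_singleton.1 h1 with ⟨p, hp⟩
    rcases subset_singleton_iff.1 hp with h | h <;> rw [h]
    · simp
    · exact .inr (by simpa using hsub (h ▸ mem_singleton_self p : p ∈ d.primeFactors))

theorem Finset.prod_one_sub_eq_one_sub_sum {ι R : Type*} [CommRing R] {s : Finset ι}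
    {x : ι → R} (hx : ∀ i ∈ s, ∀ j ∈ s, i ≠ j → x i * x j = 0) :
    ∏ i ∈ s, (1 - x i) = 1 - ∑ i ∈ s, x i := by
  induction s using Finset.cons_induction with
  | empty => simp
  | cons a s ha ih =>
    have hmul : x a * ∑ i ∈ s, x i = 0 := by
      rw [mul_sum]
      exact sum_eq_zero fun i hi =>
        hx a (mem_cons_self a s) i (mem_cons_of_mem hi) (ne_of_mem_of_not_mem hi ha).symm
    rw [prod_cons, sum_cons,
      ih fun i hi j hj => hx i (mem_cons_of_mem hi) j (mem_cons_of_mem hj)]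
    linear_combination hmul

theorem Polynomial.cyclotomic_mul_prod_one_sub_X_pow_moebius {n : ℕ} (hn : 1 < n) :
    cyclotomic n ℤ * ∏ d ∈ n.divisors with μ (n / d) = -1, (1 - X ^ d) =
      ∏ d ∈ n.divisors with μ (n / d) = 1, (1 - X ^ d) := by
  apply IsFractionRing.injective ℤ[X] (RatFunc ℤ)
  set g : ℕ → RatFunc ℤ := fun d => algebraMap ℤ[X] (RatFunc ℤ) (1 - X ^ d) with hg
  have hg0 : ∀ d ∈ n.divisors, g d ≠ 0 := fun d hd => by
    have := X_pow_sub_C_ne_zero (Nat.pos_of_mem_divisors hd) (1 : ℤ)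
    rw [C_1, sub_ne_zero] at this
    rw [hg, ne_eq, IsFractionRing.to_map_eq_zero_iff, sub_eq_zero]
    exact this.symm
  -- `X ^ d - 1 = -(1 - X ^ d)`, and the signs cancel because `∑ d ∈ n.divisors, μ d = 0`.
  have hsign : ∀ s : Finset ℕ,
      ∏ d ∈ s, (-1 : RatFunc ℤ) ^ μ (n / d) = (-1) ^ ∑ d ∈ s, μ (n / d) := by
    intro s
    induction s using Finset.cons_induction <;> simp_all [zpow_add₀]
  have hΦ : algebraMap ℤ[X] (RatFunc ℤ) (cyclotomic n ℤ) = ∏ d ∈ n.divisors, g d ^ μ (n / d) :=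
    calc algebraMap ℤ[X] (RatFunc ℤ) (cyclotomic n ℤ)
        = ∏ d ∈ n.divisors, ((-1) ^ μ (n / d) * g d ^ μ (n / d)) := by
          rw [cyclotomic_eq_prod_X_pow_sub_one_pow_moebius, Nat.prod_divisorsAntidiagonal'
            (fun a b => algebraMap ℤ[X] (RatFunc ℤ) (X ^ b - 1) ^ μ a)]
          refine prod_congr rfl fun d _ => ?_
          rw [← mul_zpow, neg_one_mul, hg, ← map_neg, neg_sub]
      _ = ∏ d ∈ n.divisors, g d ^ μ (n / d) := by
          rw [prod_mul_distrib, hsign, Nat.sum_div_divisors, sum_divisors_moebius_eq_zero hn,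
            zpow_zero, one_mul]
  rw [map_mul, map_prod, map_prod, hΦ]
  change (∏ d ∈ n.divisors, g d ^ μ (n / d)) * ∏ d ∈ _ with _, g d = ∏ d ∈ _ with _, g d
  clear_value g
  rw [prod_filter, prod_filter, ← prod_mul_distrib]
  refine prod_congr rfl fun d hd => ?_
  rcases moebius_eq_or (n / d) with h | h | h <;> simp [h, hg0 d hd]

namespace Polynomial

variable {R : Type*} [CommRing R] {K : ℕ}

variable (R K) in
noncomputable abbrev modXPow : R[X] →+* R[X] ⧸ Ideal.span {(X : R[X]) ^ K} :=
  Ideal.Quotient.mk _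

theorem modXPow_X_pow_of_le {d : ℕ} (h : K ≤ d) : modXPow R K (X ^ d) = 0 :=
  Ideal.Quotient.eq_zero_iff_mem.2 (Ideal.mem_span_singleton.2 (pow_dvd_pow X h))

theorem isNilpotent_modXPow_X : IsNilpotent (modXPow R K X) :=
  ⟨K, by rw [← map_pow, modXPow_X_pow_of_le le_rfl]⟩

theorem coeff_eq_of_modXPow_eq {f g : R[X]} (h : modXPow R K f = modXPow R K g) {j : ℕ}
    (hj : j < K) : f.coeff j = g.coeff j := by
  rw [Ideal.Quotient.eq, Ideal.mem_span_singleton, X_pow_dvd_iff] at h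
  simpa [sub_eq_zero] using h j hj

theorem modXPow_prod_one_sub_X_pow_filter_lt (D : Finset ℕ) :
    modXPow R K (∏ d ∈ D with d < K, (1 - X ^ d)) = modXPow R K (∏ d ∈ D, (1 - X ^ d)) := by
  simp only [map_prod]
  refine prod_filter_of_ne fun d _ hd => ?_
  by_contra! hKd
  rw [map_sub, map_one, modXPow_X_pow_of_le hKd, sub_zero] at hd
  exact hd rfl

end Polynomial

theorem Polynomial.modXPow_cyclotomic_prod_primes_mul_prod_one_sub_X_pow
    {s : Finset ℕ} (hs : ∀ p ∈ s, p.Prime) (hne : s.Nonempty) (heven : Even #s) {K : ℕ}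
    (hK : ∀ p ∈ s, ∀ q ∈ s, p ≠ q → K ≤ p * q) :
    modXPow ℤ K (cyclotomic (∏ p ∈ s, p) ℤ * ∏ p ∈ s, (1 - X ^ p)) = modXPow ℤ K (1 - X) := by
  set m := ∏ p ∈ s, p with hm
  obtain ⟨p₀, hp₀⟩ := hne
  have hm1 : 1 < m := (hs p₀ hp₀).one_lt.trans_le <|
    Nat.le_of_dvd (prod_pos fun p hp => (hs p hp).pos) (dvd_prod_of_mem _ hp₀)
  have hμm : μ m = 1 := by rw [moebius_prod_primes hs, heven.neg_one_pow]
  have hμp : ∀ p ∈ s, μ (m / p) = -1 := fun p hp => by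
    rw [hm, ← prod_erase_mul s (fun q => q) hp, Nat.mul_div_cancel _ (hs p hp).pos,
      moebius_prod_primes fun q hq => hs q (mem_of_mem_erase hq), card_erase_of_mem hp,
      (Nat.Even.sub_odd (card_pos.2 ⟨p, hp⟩) heven odd_one).neg_one_pow]
  have hsmall : ∀ d, d ∣ m → d < K → d = 1 ∨ d ∈ s := fun d hd hdK =>
    Nat.eq_one_or_mem_of_dvd_prod_primes hs hK hd hdK
  have hfilter_neg : {d ∈ m.divisors | μ (m / d) = -1}.filter (· < K) = s.filter (· < K) := by
    ext d
    simp only [mem_filter, Nat.mem_divisors]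
    constructor
    · rintro ⟨⟨⟨hdm, -⟩, hμd⟩, hdK⟩
      rcases hsmall d hdm hdK with rfl | hd
      · simp [hμm] at hμd
      · exact ⟨hd, hdK⟩
    · rintro ⟨hd, hdK⟩
      exact ⟨⟨⟨dvd_prod_of_mem _ hd, by omega⟩, hμp d hd⟩, hdK⟩
  have hfilter_pos :
      {d ∈ m.divisors | μ (m / d) = 1}.filter (· < K) = ({1} : Finset ℕ).filter (· < K) := by
    ext d
    simp only [mem_filter, Nat.mem_divisors, mem_singleton]
    constructor
    · rintro ⟨⟨⟨hdm, -⟩, hμd⟩, hdK⟩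
      rcases hsmall d hdm hdK with rfl | hd
      · exact ⟨rfl, hdK⟩
      · simp [hμp d hd] at hμd
    · rintro ⟨rfl, hdK⟩
      exact ⟨⟨⟨one_dvd m, by omega⟩, by simpa using hμm⟩, hdK⟩
  have hprod_neg : modXPow ℤ K (∏ d ∈ m.divisors with μ (m / d) = -1, (1 - X ^ d)) =
      modXPow ℤ K (∏ p ∈ s, (1 - X ^ p)) := by
    rw [← modXPow_prod_one_sub_X_pow_filter_lt, hfilter_neg,
      modXPow_prod_one_sub_X_pow_filter_lt]
  have hprod_pos : modXPow ℤ K (∏ d ∈ m.divisors with μ (m / d) = 1, (1 - X ^ d)) =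
      modXPow ℤ K (1 - X) := by
    rw [← modXPow_prod_one_sub_X_pow_filter_lt, hfilter_pos,
      modXPow_prod_one_sub_X_pow_filter_lt, prod_singleton, pow_one]
  rw [map_mul, ← hprod_neg, ← map_mul, cyclotomic_mul_prod_one_sub_X_pow_moebius hm1, hprod_pos]

theorem Finset.card_filter_le_eq_count (s : Finset ℕ) (j : ℕ) :
    #{p ∈ s | p ≤ j} = Nat.count (· ∈ s) (j + 1) := by
  rw [Nat.count_eq_card_filter_range]
  congr 1
  ext p
  simp [and_comm]

theorem Polynomial.coeff_one_add_sum_X_pow {R : Type*} [Semiring R] (s : Finset ℕ) (j : ℕ) :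
    (1 + ∑ p ∈ s, X ^ p : R[X]).coeff j =
      (if j = 0 then 1 else 0) + if j ∈ s then 1 else 0 := by
  simp [coeff_one, coeff_X_pow]

theorem Polynomial.coeff_eq_of_one_add_X_mul_eq {R : Type*} [CommRing R] {f : R[X]}
    {s : Finset ℕ} (hs : ∀ p ∈ s, Odd p) {K : ℕ}
    (hf : ∀ j < K, ((1 + X) * f).coeff j = (1 + ∑ p ∈ s, X ^ p : R[X]).coeff j) {j : ℕ}
    (hj : j < K) : f.coeff j = (-1) ^ j * (1 - #{p ∈ s | p ≤ j}) := by
  have h0 : 0 ∉ s := fun h => Nat.not_odd_zero (hs 0 h)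
  rw [card_filter_le_eq_count]
  induction j with
  | zero =>
    have := hf 0 hj
    rw [mul_coeff_zero, coeff_one_add_sum_X_pow] at this
    simpa [h0, Nat.count_succ] using this
  | succ j ih =>
    have := hf (j + 1) hj
    rw [add_mul, one_mul, coeff_add, coeff_X_mul, ih (by omega),
      coeff_one_add_sum_X_pow] at this
    rw [eq_sub_of_add_eq this, Nat.count_succ _ (j + 1)]
    by_cases hmem : j + 1 ∈ s
    · have : Even j := Nat.not_odd_iff_even.1 (Nat.odd_add_one.1 (hs _ hmem))
      simp [hmem, this.neg_one_pow, pow_succ]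
    · simp [hmem, pow_succ]

theorem Polynomial.coeff_cyclotomic_two_mul_prod_primes {P : Finset ℕ} {N : ℕ}
    (hP : ∀ p ∈ P, p.Prime ∧ N < p ∧ p < 2 * N) (hodd : Odd #P) {j : ℕ} (hj : j < 2 * N + 2) :
    (cyclotomic (2 * ∏ p ∈ P, p) ℤ).coeff j = (-1) ^ j * (1 - #{p ∈ P | p ≤ j}) := by
  have h2 : 2 ∉ P := fun h => by have := hP 2 h; omega
  have hK : ∀ p ∈ insert 2 P, ∀ q ∈ insert 2 P, p ≠ q → 2 * N + 2 ≤ p * q := by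
    simp only [mem_insert]
    rintro p (rfl | hp) q (rfl | hq) hpq
    · exact absurd rfl hpq
    · have := hP q hq; omega
    · have := hP p hp; omega
    · have := Nat.mul_le_mul (hP p hp).2.1 (hP q hq).2.1
      nlinarith [(hP p hp).2.2]
  have hmod := modXPow_cyclotomic_prod_primes_mul_prod_one_sub_X_pow
    (by simpa [Nat.prime_two] using fun p hp => (hP p hp).1) (insert_nonempty 2 P)
    (by rw [card_insert_of_notMem h2]; exact hodd.add_one) hK
  rw [prod_insert h2, prod_insert h2] at hmod
  set φ := modXPow ℤ (2 * N + 2)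
  have hX : ∀ p ∈ P, ∀ q ∈ P, φ (X ^ p) * φ (X ^ q) = 0 := fun p hp q hq => by
    rw [← map_mul, ← pow_add]
    exact modXPow_X_pow_of_le (by have := hP p hp; have := hP q hq; omega)
  set S := φ (∑ p ∈ P, X ^ p)
  have hprod : φ (∏ p ∈ P, (1 - X ^ p)) = 1 - S := by
    simp only [S, map_prod, map_sub, map_one, map_sum]
    exact prod_one_sub_eq_one_sub_sum fun p hp q hq _ => hX p hp q hq
  have hS : S ^ 2 = 0 := by
    simp only [S, map_sum, sq, sum_mul_sum]
    exact sum_eq_zero fun p hp => sum_eq_zero fun q hq => hX p hp q hq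
  -- `Φ (1 - x²) (1 - S) = 1 - x` with `1 - x` a unit and `(1 - S)⁻¹ = 1 + S`.
  have hcancel : (1 + φ X) * φ (cyclotomic (2 * ∏ p ∈ P, p) ℤ) * (1 - S) = 1 :=
    isNilpotent_modXPow_X.isUnit_one_sub.mul_left_cancel <| by
      simp only [map_mul, map_sub, map_one, map_pow, hprod] at hmod
      linear_combination hmod
  have hf : φ ((1 + X) * cyclotomic (2 * ∏ p ∈ P, p) ℤ) = φ (1 + ∑ p ∈ P, X ^ p) := by
    simp only [map_mul, map_add, map_one]
    linear_combination (1 + S) * hcancel + (1 + φ X) * φ (cyclotomic (2 * ∏ p ∈ P, p) ℤ) * hS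
  exact coeff_eq_of_one_add_X_mul_eq
    (fun p hp => (hP p hp).1.odd_of_ne_two fun h => h2 (h ▸ hp))
    (fun i hi => coeff_eq_of_modXPow_eq hf hi) hj

theorem Finset.nth_mem_and_card_filter_le_nth {s : Finset ℕ} {i : ℕ} (hi : i < #s) :
    Nat.nth (· ∈ s) i ∈ s ∧ #{p ∈ s | p ≤ Nat.nth (· ∈ s) i} = i + 1 := by
  have hcard : ∀ hf : (Set.ofPred (· ∈ s)).Finite, i < #hf.toFinset := fun hf => by
    convert hi
    ext; simp
  exact ⟨Nat.nth_mem i hcard, by rw [card_filter_le_eq_count, Nat.count_nth_succ hcard]⟩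

theorem cyclotomic_coeff_even_index_surjective :
    {z : ℤ | ∃ n k : ℕ, 0 < n ∧ (Polynomial.cyclotomic (2 * n) ℤ).coeff k = z} = Set.univ := by
  refine Set.eq_univ_of_forall fun z => ?_
  obtain ⟨n, hz⟩ := Int.eq_nat_or_neg z
  obtain ⟨N, hN⟩ := exists_le_card_primes_Ioo_two_mul (2 * n + 1)
  obtain ⟨P, hPN, hcard⟩ := exists_subset_card_eq hN
  have hP : ∀ p ∈ P, p.Prime ∧ N < p ∧ p < 2 * N := fun p hp => by
    simpa [and_comm] using hPN hp
  have hodd : Odd #P := hcard ▸ odd_two_mul_add_one n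
  obtain ⟨hqP, hq⟩ := nth_mem_and_card_filter_le_nth (s := P) (i := n) (by omega)
  set q := Nat.nth (· ∈ P) n
  obtain ⟨hq_prime, hNq, hq2N⟩ := hP q hqP
  have hq_odd : Odd q := hq_prime.odd_of_ne_two (by omega)
  have hq' : #{p ∈ P | p ≤ q + 1} = n + 1 := by
    have hq1 : q + 1 ∉ P := fun h =>
      Nat.not_even_iff_odd.2 ((hP _ h).1.odd_of_ne_two (by omega)) hq_odd.add_one
    rw [card_filter_le_eq_count, Nat.count_succ, ← card_filter_le_eq_count, hq]
    simp [hq1]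
  have hprod_pos : 0 < ∏ p ∈ P, p := prod_pos fun p hp => (hP p hp).1.pos
  rcases hz with rfl | rfl
  · refine ⟨∏ p ∈ P, p, q, hprod_pos, ?_⟩
    rw [coeff_cyclotomic_two_mul_prod_primes hP hodd (by omega), hq, hq_odd.neg_one_pow]
    push_cast; ring
  · refine ⟨∏ p ∈ P, p, q + 1, hprod_pos, ?_⟩
    rw [coeff_cyclotomic_two_mul_prod_primes hP hodd (by omega), hq',
      hq_odd.add_one.neg_one_pow]
    push_cast; ring
end
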